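/- arXiv:1608.07490 — 4 statements merged into one kernel-verified Lean document; each statement's English description precedes it below -/
import Mathlib

section
/- Suppose graded series V_{g,n} satisfy the recurrence V_{g+1,n} = S·(V_{g,n+1} + 2t·V_{g,n} + t²·V_{g,n-1}) for n ≥ 1, g ≥ 0, extended by V_{g,0} = 0 and V_{g,-n} = −t^{-2n} V_{g,n}, with initial condition V_{0,n} = 1 + t³ for n > 0, where S = 1/(1-t²)². Then for all g, n ≥ 0: V_{g,n} = S^g (1+t³) Σ_{j=0}^{g+n-1} t^j (binom(2g, j) − binom(2g, j−2n)). -/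
/-!
Let `P_{g,n} = ∑_{j < g+n} (binom(2g, j) − binom(2g, j − 2n)) t^j`, the part of degree `< g+n` of
`(1+t)^{2g} (1 − t^{2n})`. Pascal's rule applied twice,
`binom(2g+2, j) = binom(2g, j) + 2 binom(2g, j−1) + binom(2g, j−2)`, gives
`P_{g+1,n} = P_{g,n+1} + 2t P_{g,n} + t² P_{g,n−1}` for `n ≥ 1`: multiplying by `t` or `t²` shifts
the coefficients, and as coefficients of negative index vanish, all three sums run over the same
range `j < g+n+1`. So `S^g (1+t³) P_{g,n}` satisfies the recurrence, and it has the right values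
at `g = 0` (`P_{0,n} = 1` for `n > 0`) and at `n = 0` (`P_{g,0} = 0`); induction on `g` concludes.
-/

/-- Integer binomial coefficient with the conventions of the paper:
`ibinom n k = 0` when `k < 0` or `k > n`, except `ibinom (-1) (-1) = 1`. -/
def ibinom (n k : ℤ) : ℤ :=
  if n = -1 ∧ k = -1 then 1
  else if 0 ≤ k ∧ k ≤ n then (n.toNat.choose k.toNat : ℤ)
  else 0

open Finset

lemma ibinom_of_nonneg {m : ℤ} (hm : 0 ≤ m) (k : ℤ) :
    ibinom m k = if 0 ≤ k then (m.toNat.choose k.toNat : ℤ) else 0 := by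
  unfold ibinom
  rw [if_neg (by omega)]
  split_ifs with h₁ h₂ h₂
  · rfl
  · exact absurd h₁.1 h₂
  · rw [Nat.choose_eq_zero_of_lt (by omega), Nat.cast_zero]
  · rfl

lemma ibinom_of_neg {m k : ℤ} (hm : 0 ≤ m) (hk : k < 0) : ibinom m k = 0 := by
  rw [ibinom_of_nonneg hm, if_neg (by omega)]

lemma ibinom_add_one {m : ℤ} (hm : 0 ≤ m) (k : ℤ) :
    ibinom (m + 1) k = ibinom m k + ibinom m (k - 1) := by
  rw [ibinom_of_nonneg (by omega), ibinom_of_nonneg hm, ibinom_of_nonneg hm]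
  lift m to ℕ using hm
  obtain hk | rfl | hk := lt_trichotomy k 0
  · rw [if_neg (by omega), if_neg (by omega), if_neg (by omega), add_zero]
  · simp
  · lift k to ℕ using hk.le
    obtain ⟨j, rfl⟩ := Nat.exists_eq_add_one_of_ne_zero (by omega : k ≠ 0)
    rw [if_pos (by omega), if_pos (by omega), if_pos (by omega),
      show ((m : ℤ) + 1).toNat = m + 1 by omega, show ((j + 1 : ℕ) : ℤ).toNat = j + 1 by omega,
      show ((j + 1 : ℕ) - 1 : ℤ).toNat = j by omega, Int.toNat_natCast, Nat.choose_succ_succ',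
      Nat.cast_add, add_comm]

lemma ibinom_add_two {m : ℤ} (hm : 0 ≤ m) (k : ℤ) :
    ibinom (m + 2) k = ibinom m k + 2 * ibinom m (k - 1) + ibinom m (k - 2) := by
  rw [show m + 2 = m + 1 + 1 by ring, ibinom_add_one (by omega), ibinom_add_one hm,
    ibinom_add_one hm, sub_sub, one_add_one_eq_two]
  ring

lemma mul_sum_range_zsmul_pow {R : Type*} [Ring R] (T : R) (c : ℤ → ℤ) (hc : c (-1) = 0)
    (N : ℕ) :
    T * ∑ j ∈ range N, c j • T ^ j = ∑ j ∈ range (N + 1), c (j - 1) • T ^ j := by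
  rw [sum_range_succ', mul_sum]
  simp only [Nat.cast_zero, zero_sub, hc, zero_smul, add_zero, Nat.cast_succ,
    add_sub_cancel_right, mul_smul_comm, pow_succ']

def vCoeff (g n : ℕ) (k : ℤ) : ℤ :=
  ibinom (2 * g) k - ibinom (2 * g) (k - 2 * n)

def vSum {R : Type*} [Ring R] (T : R) (g n : ℕ) : R :=
  ∑ j ∈ range (g + n), vCoeff g n j • T ^ j

lemma vCoeff_of_neg (g n : ℕ) {k : ℤ} (hk : k < 0) : vCoeff g n k = 0 := by
  rw [vCoeff, ibinom_of_neg (by positivity) hk, ibinom_of_neg (by positivity) (by omega),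
    sub_zero]

lemma vCoeff_succ_succ (g n : ℕ) (k : ℤ) :
    vCoeff (g + 1) (n + 1) k =
      vCoeff g (n + 2) k + 2 * vCoeff g (n + 1) (k - 1) + vCoeff g n (k - 2) := by
  simp only [vCoeff]
  push_cast
  rw [mul_add, mul_one, ibinom_add_two (by positivity), ibinom_add_two (by positivity)]
  ring_nf

section

variable {R : Type*} [Ring R] (T : R)

lemma vSum_zero_right (g : ℕ) : vSum T g 0 = 0 := by
  simp [vSum, vCoeff]

lemma vSum_zero_left (n : ℕ) : vSum T 0 (n + 1) = 1 := by
  rw [vSum, sum_eq_single 0]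
  · simp [vCoeff, ibinom_of_nonneg le_rfl]
  · intro j hj hj0
    rw [mem_range] at hj
    simp only [vCoeff, Nat.cast_zero, mul_zero]
    rw [ibinom_of_neg (k := j - 2 * (n + 1 : ℕ)) le_rfl (by omega), ibinom_of_nonneg le_rfl,
      if_pos (by omega), Nat.choose_eq_zero_of_lt (by omega)]
    simp
  · simp

lemma vSum_succ_succ (g n : ℕ) :
    vSum T (g + 1) (n + 1) =
      vSum T g (n + 2) + 2 * T * vSum T g (n + 1) + T ^ 2 * vSum T g n := by
  have shift₁ :
      T * vSum T g (n + 1) = ∑ j ∈ range (g + n + 2), vCoeff g (n + 1) (j - 1) • T ^ j :=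
    mul_sum_range_zsmul_pow T _ (vCoeff_of_neg _ _ (by omega)) _
  have shift₂ : T ^ 2 * vSum T g n = ∑ j ∈ range (g + n + 2), vCoeff g n (j - 2) • T ^ j := by
    rw [pow_two, mul_assoc, vSum, mul_sum_range_zsmul_pow T _ (vCoeff_of_neg _ _ (by omega)),
      mul_sum_range_zsmul_pow T (fun k => vCoeff g n (k - 1)) (vCoeff_of_neg _ _ (by omega))]
    simp only [sub_sub, one_add_one_eq_two]
  rw [mul_assoc, shift₁, shift₂, vSum, vSum, show g + 1 + (n + 1) = g + n + 2 by ring,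
    show g + (n + 2) = g + n + 2 by ring, mul_sum, ← sum_add_distrib, ← sum_add_distrib]
  refine sum_congr rfl fun j _ => ?_
  rw [vCoeff_succ_succ, add_smul, add_smul, mul_smul, two_smul, two_mul]

end

theorem V_recurrence_solution_general (V : ℕ → ℤ → LaurentSeries ℚ)
    (T S : LaurentSeries ℚ)
    (hzero : ∀ g : ℕ, V g 0 = 0)
    (hrec : ∀ (g : ℕ) (n : ℤ), 1 ≤ n →
      V (g + 1) n = S * (V g (n + 1) + 2 * T * V g n + T ^ 2 * V g (n - 1)))
    (hinit : ∀ n : ℤ, 0 < n → V 0 n = 1 + T ^ 3) :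
    ∀ (g n : ℕ),
      V g n = S ^ g * (1 + T ^ 3) *
        ∑ j ∈ Finset.range (g + n),
          (ibinom (2 * g) j - ibinom (2 * g) ((j : ℤ) - 2 * n)) • T ^ j := by
  show ∀ g n : ℕ, V g n = S ^ g * (1 + T ^ 3) * vSum T g n
  intro g
  induction g with
  | zero =>
    rintro (_ | n)
    · simp [hzero, vSum_zero_right]
    · rw [hinit _ (by positivity), vSum_zero_left]
      ring
  | succ g ih =>
    rintro (_ | n)
    · simp [hzero, vSum_zero_right]
    · rw [Nat.cast_succ, hrec g _ (by omega), add_sub_cancel_right,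
        show (n : ℤ) + 1 + 1 = (n + 2 : ℕ) by push_cast; ring, ← Nat.cast_succ, ih, ih, ih,
        vSum_succ_succ]
      ring

/-- Solution of the `V` recurrence (Corollary 4.4): if
`V_{g+1,n} = S (V_{g,n+1} + 2t V_{g,n} + t² V_{g,n−1})` for `n ≥ 1, g ≥ 0`, extended by
`V_{g,0} = 0` and `V_{g,−n} = −t^{−2n} V_{g,n}`, with `V_{0,n} = 1 + t³` for `n > 0`,
where `S = 1/(1−t²)²`, then for all `g, n ≥ 0`:
`V_{g,n} = S^g (1+t³) Σ_{j=0}^{g+n−1} t^j (binom(2g,j) − binom(2g,j−2n))`. -/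
theorem V_recurrence_solution (V : ℕ → ℤ → LaurentSeries ℚ)
    (T S : LaurentSeries ℚ) (hT : T = HahnSeries.single 1 1)
    (hS : S = ((1 - T ^ 2) ^ 2)⁻¹)
    (hzero : ∀ g : ℕ, V g 0 = 0)
    (hneg : ∀ (g : ℕ) (n : ℕ), V g (-(n : ℤ)) = -(T ^ (-(2 * n : ℤ)) * V g n))
    (hrec : ∀ (g : ℕ) (n : ℤ), 1 ≤ n →
      V (g + 1) n = S * (V g (n + 1) + 2 * T * V g n + T ^ 2 * V g (n - 1)))
    (hinit : ∀ n : ℤ, 0 < n → V 0 n = 1 + T ^ 3) :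
    ∀ (g n : ℕ),
      V g n = S ^ g * (1 + T ^ 3) *
        ∑ j ∈ Finset.range (g + n),
          (ibinom (2 * g) j - ibinom (2 * g) ((j : ℤ) - 2 * n)) • T ^ j :=
  V_recurrence_solution_general V T S hzero hrec hinit
end

section
/- Let S = 1/(1−t²)² and V_{g,1} = S^g (1+t³) Σ_{j=0}^{g} t^j (binom(2g,j) − binom(2g,j−2)). Then V_{g,1} ≡ (1+t³)(1−t²)/(1−t)^{2g} modulo t^{g+2} in the formal power series ring Q[[t]]. -/
/-!
Since `(1 - t²)^{2g} = (1 - t)^{2g} (1 + t)^{2g}`, one has `S^g (1 + t)^{2g} = (1 - t)^{-2g}`. The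
sum in `V_{g,1}` is the truncation below degree `g + 1` of `(1 - t²)(1 + t)^{2g}`, whose coefficient
of `t^{g+1}` vanishes because `binom(2g, g+1) = binom(2g, g-1)`; so modulo `t^{g+2}` the sum may be
replaced by `(1 - t²)(1 + t)^{2g}` itself.
-/

open PowerSeries

theorem ibinom_natCast (n k : ℕ) : ibinom n k = n.choose k := by
  unfold ibinom
  rw [if_neg (by omega)]
  split_ifs
  · simp
  · rw [Nat.choose_eq_zero_of_lt (by omega), Nat.cast_zero]

theorem ibinom_natCast_of_neg (n : ℕ) {k : ℤ} (hk : k < 0) : ibinom n k = 0 := by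
  unfold ibinom
  rw [if_neg (by omega), if_neg (by omega)]

theorem ibinom_natCast_sub_two (n m : ℕ) :
    ibinom n ((m : ℤ) - 2) = if 2 ≤ m then (n.choose (m - 2) : ℤ) else 0 := by
  split_ifs
  · rw [show (m : ℤ) - 2 = ((m - 2 : ℕ) : ℤ) by omega, ibinom_natCast]
  · exact ibinom_natCast_of_neg n (by omega)

section CommSemiring

variable {R : Type*} [CommSemiring R]

theorem coeff_one_add_X_pow (n m : ℕ) : coeff m ((1 + X) ^ n : R⟦X⟧) = n.choose m := by
  rw [show ((1 + X) ^ n : R⟦X⟧) = ((1 + Polynomial.X) ^ n : Polynomial R) by push_cast; rfl,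
    Polynomial.coeff_coe, Polynomial.coeff_one_add_X_pow]

theorem sum_range_coeff_smul_X_pow (n : ℕ) (f : R⟦X⟧) :
    ∑ j ∈ Finset.range n, coeff j f • X ^ j = (trunc n f : R⟦X⟧) := by
  ext m
  simp [coeff_trunc, coeff_X_pow]

theorem coeff_mul_coe_trunc_of_lt {i n : ℕ} (h : i < n) (f g : R⟦X⟧) :
    coeff i (f * (trunc n g : R⟦X⟧)) = coeff i (f * g) := by
  rw [coeff_mul_eq_coeff_trunc_mul_trunc _ _ h, trunc_trunc,
    ← coeff_mul_eq_coeff_trunc_mul_trunc _ _ h]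

end CommSemiring

section CommRing

variable {R : Type*} [CommRing R]

theorem coeff_one_sub_X_sq_mul_one_add_X_pow (n m : ℕ) :
    coeff m ((1 - X ^ 2) * (1 + X) ^ n : R⟦X⟧) =
      (ibinom n m - ibinom n ((m : ℤ) - 2) : ℤ) := by
  rw [sub_mul, one_mul, map_sub, coeff_X_pow_mul', coeff_one_add_X_pow, ibinom_natCast,
    ibinom_natCast_sub_two]
  split_ifs <;> simp [coeff_one_add_X_pow]

theorem coeff_succ_one_sub_X_sq_mul_one_add_X_pow_two_mul (g : ℕ) :
    coeff (g + 1) ((1 - X ^ 2) * (1 + X) ^ (2 * g) : R⟦X⟧) = 0 := by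
  rw [coeff_one_sub_X_sq_mul_one_add_X_pow, ibinom_natCast, ibinom_natCast_sub_two]
  split_ifs
  · rw [Nat.choose_symm_of_eq_add (show 2 * g = g + 1 + (g + 1 - 2) by omega), sub_self,
      Int.cast_zero]
  · obtain rfl : g = 0 := by omega
    simp

theorem sum_range_ibinom_smul_X_pow_eq_trunc (g : ℕ) :
    ∑ j ∈ Finset.range (g + 1),
        (ibinom (2 * g) j - ibinom (2 * g) ((j : ℤ) - 2)) • (X ^ j : R⟦X⟧)
      = trunc (g + 2) ((1 - X ^ 2) * (1 + X) ^ (2 * g) : R⟦X⟧) := by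
  calc _ = ∑ j ∈ Finset.range (g + 1),
          coeff j ((1 - X ^ 2) * (1 + X) ^ (2 * g) : R⟦X⟧) • X ^ j := by
        refine Finset.sum_congr rfl fun j _ => ?_
        rw [coeff_one_sub_X_sq_mul_one_add_X_pow, Int.cast_smul_eq_zsmul]
        push_cast
        rfl
    _ = _ := by
        rw [sum_range_coeff_smul_X_pow, trunc_succ _ (g + 1),
          coeff_succ_one_sub_X_sq_mul_one_add_X_pow_two_mul, map_zero, add_zero]

end CommRing

theorem inv_one_sub_X_sq_sq_pow_mul_one_add_X_pow {k : Type*} [Field k] (g : ℕ) :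
    ((1 - X ^ 2 : k⟦X⟧) ^ 2)⁻¹ ^ g * (1 + X) ^ (2 * g) = ((1 - X) ^ (2 * g))⁻¹ := by
  rw [PowerSeries.eq_inv_iff_mul_eq_one (by simp), mul_assoc, ← mul_pow, pow_mul, ← mul_pow,
    show ((1 + X) * (1 - X) : k⟦X⟧) ^ 2 = (1 - X ^ 2) ^ 2 by ring,
    PowerSeries.inv_mul_cancel _ (by simp), one_pow]

/-- With `S = 1/(1−t²)²` and
`V_{g,1} = S^g (1+t³) Σ_{j=0}^{g} t^j (binom(2g,j) − binom(2g,j−2))`, one has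
`V_{g,1} ≡ (1+t³)(1−t²)/(1−t)^{2g}` modulo `t^{g+2}` in `ℚ[[t]]`. -/
theorem V_g_one_mod_t_g_two (g : ℕ) (i : ℕ) (hi : i < g + 2) :
    PowerSeries.coeff (R := ℚ) i
        ((((1 - X ^ 2 : PowerSeries ℚ) ^ 2)⁻¹) ^ g * (1 + X ^ 3) *
          ∑ j ∈ Finset.range (g + 1),
            (ibinom (2 * g) j - ibinom (2 * g) ((j : ℤ) - 2)) • X ^ j)
      = PowerSeries.coeff (R := ℚ) i
          ((1 + X ^ 3) * (1 - X ^ 2) * ((1 - X : PowerSeries ℚ) ^ (2 * g))⁻¹) := by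
  rw [sum_range_ibinom_smul_X_pow_eq_trunc, coeff_mul_coe_trunc_of_lt hi,
    ← inv_one_sub_X_sq_sq_pow_mul_one_add_X_pow]
  congr 1
  ring
end

section
/- For the closed nonorientable surface N_h (h ≥ 1), let A = Q[p, ũ_1,...,ũ_{h−1}] ⊗ Λ[ṽ, u_1,...,u_{h−1}] be the free graded-commutative algebra where p has degree 0 weight 1, u_j degree 1 weight 1, ũ_j degree 2 weight 2, ṽ degree 3 weight 2; then the dimension of the degree-i, weight-k graded piece of A (which gives the Betti number β_i of the unordered configuration space B_k(N_h)) equals binom(h+i−2, h−2) + binom(h+i−5, h−2) for i ≤ k, equals binom(h+i−5, h−2) for i = k+1, and is 0 otherwise, with the convention binom(−1,−1) = 1. -/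
/-- Auxiliary "pair type": exponents of the `ũ_j` and the set of `u_j`, of total degree `m`. -/
private def PT (d m : ℕ) : Type :=
  {p : (Fin d → ℕ) × (Fin d → Bool) //
    (2 * ∑ j, p.1 j) + (∑ j, if p.2 j then 1 else 0) = m}

private def pairEquiv (d m : ℕ) :
    PT d m ≃ {f : Fin d → ℕ // ∑ j, f j = m} where
  toFun p := ⟨fun j => 2 * p.1.1 j + (if p.1.2 j then 1 else 0), by
    rw [Finset.sum_add_distrib, ← Finset.mul_sum]; exact p.2⟩
  invFun f := ⟨(fun j => f.1 j / 2, fun j => decide (f.1 j % 2 = 1)), by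
    have key : ∀ j : Fin d,
        2 * (f.1 j / 2) + (if decide (f.1 j % 2 = 1) then 1 else 0) = f.1 j := by
      intro j
      by_cases hj : f.1 j % 2 = 1
      · rw [if_pos (decide_eq_true hj)]; omega
      · rw [decide_eq_false hj, if_neg Bool.false_ne_true]; omega
    calc (2 * ∑ j, f.1 j / 2) + (∑ j, if decide (f.1 j % 2 = 1) then 1 else 0)
        = ∑ j, (2 * (f.1 j / 2) + (if decide (f.1 j % 2 = 1) then 1 else 0)) := by
          rw [Finset.sum_add_distrib, Finset.mul_sum]
      _ = ∑ j, f.1 j := Finset.sum_congr rfl fun j _ => key j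
      _ = m := f.2⟩
  left_inv p := by
    apply Subtype.ext
    apply Prod.ext
    · funext j
      show (2 * p.1.1 j + (if p.1.2 j then 1 else 0)) / 2 = p.1.1 j
      cases hs : p.1.2 j
      · rw [if_neg Bool.false_ne_true]; omega
      · rw [if_pos rfl]; omega
    · funext j
      show decide ((2 * p.1.1 j + (if p.1.2 j then 1 else 0)) % 2 = 1) = p.1.2 j
      cases hs : p.1.2 j
      · rw [if_neg Bool.false_ne_true]
        exact decide_eq_false (by omega)
      · rw [if_pos rfl]
        exact decide_eq_true (by omega)
  right_inv f := by
    apply Subtype.ext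
    funext j
    show 2 * (f.1 j / 2) + (if decide (f.1 j % 2 = 1) then 1 else 0) = f.1 j
    by_cases hj : f.1 j % 2 = 1
    · rw [if_pos (decide_eq_true hj)]; omega
    · rw [decide_eq_false hj, if_neg Bool.false_ne_true]; omega

private noncomputable def ptEquivSym (d m : ℕ) : Sym (Fin d) m ≃ PT d m :=
  (Sym.equivNatSumOfFintype (Fin d) m).trans (pairEquiv d m).symm

private instance (d m : ℕ) : Finite (PT d m) := Finite.of_equiv _ (ptEquivSym d m)

private lemma cardPT (d m : ℕ) : Nat.card (PT d m) = (d + m - 1).choose m := by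
  rw [← Nat.card_congr (ptEquivSym d m), Nat.card_eq_fintype_card,
    Sym.card_sym_eq_choose, Fintype.card_fin]

private lemma ibinom_eq (h m : ℕ) (hh : 1 ≤ h) :
    ibinom ((h : ℤ) + m - 2) ((h : ℤ) - 2) = ((h - 1 + m - 1).choose m : ℤ) := by
  unfold ibinom
  rcases eq_or_lt_of_le hh with h1 | h2
  · -- h = 1
    subst h1
    rcases Nat.eq_zero_or_pos m with hm | hm
    · subst hm; norm_num
    · rw [if_neg (by omega), if_neg (by omega)]
      have : 1 - 1 + m - 1 < m := by omega
      rw [Nat.choose_eq_zero_of_lt this]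
      norm_num
  · -- h ≥ 2
    rw [if_neg (by omega), if_pos (by constructor <;> omega)]
    have h1 : ((h : ℤ) + m - 2).toNat = h - 2 + m := by omega
    have h2' : ((h : ℤ) - 2).toNat = h - 2 := by omega
    rw [h1, h2']
    have h3 : h - 1 + m - 1 = h - 2 + m := by omega
    rw [h3]
    have := Nat.choose_symm (Nat.le_add_left m (h - 2))
    simp only [Nat.add_sub_cancel] at this
    exact_mod_cast this

private lemma ibinom_small (h i : ℕ) (hi : i < 3) :
    ibinom ((h : ℤ) + i - 5) ((h : ℤ) - 2) = 0 := by
  unfold ibinom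
  split_ifs with h1 h2
  · exfalso; omega
  · exfalso; omega
  · rfl

section Equivs

variable {d i k : ℕ}

private abbrev XT (d i k : ℕ) : Type :=
  {x : ℕ × (Fin d → ℕ) × (Fin d → Bool) × Bool //
      (2 * ∑ j, x.2.1 j) + (∑ j, if x.2.2.1 j then 1 else 0)
          + (if x.2.2.2 then 3 else 0) = i ∧
      x.1 + (2 * ∑ j, x.2.1 j) + (∑ j, if x.2.2.1 j then 1 else 0)
          + (if x.2.2.2 then 2 else 0) = k}

private def equivBig (hik : i ≤ k) (h3 : 3 ≤ i) : XT d i k ≃ PT d i ⊕ PT d (i - 3) where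
  toFun x :=
    match x with
    | ⟨(_, e, s, false), hc⟩ => Sum.inl ⟨(e, s), by
        have h1 : (2 * ∑ j, e j) + (∑ j, if s j then 1 else 0) + 0 = i := hc.1
        show (2 * ∑ j, e j) + (∑ j, if s j then 1 else 0) = i
        omega⟩
    | ⟨(_, e, s, true), hc⟩ => Sum.inr ⟨(e, s), by
        have h1 : (2 * ∑ j, e j) + (∑ j, if s j then 1 else 0) + 3 = i := hc.1
        show (2 * ∑ j, e j) + (∑ j, if s j then 1 else 0) = i - 3
        omega⟩
  invFun y :=
    match y with
    | Sum.inl ⟨(e, s), hp⟩ => ⟨(k - i, e, s, false), by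
        have hp' : (2 * ∑ j, e j) + (∑ j, if s j then 1 else 0) = i := hp
        refine ⟨?_, ?_⟩
        · show (2 * ∑ j, e j) + (∑ j, if s j then 1 else 0) + 0 = i
          omega
        · show (k - i) + (2 * ∑ j, e j) + (∑ j, if s j then 1 else 0) + 0 = k
          omega⟩
    | Sum.inr ⟨(e, s), hp⟩ => ⟨(k - i + 1, e, s, true), by
        have hp' : (2 * ∑ j, e j) + (∑ j, if s j then 1 else 0) = i - 3 := hp
        refine ⟨?_, ?_⟩
        · show (2 * ∑ j, e j) + (∑ j, if s j then 1 else 0) + 3 = i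
          omega
        · show (k - i + 1) + (2 * ∑ j, e j) + (∑ j, if s j then 1 else 0) + 2 = k
          omega⟩
  left_inv x := by
    obtain ⟨⟨np, e, s, sv⟩, hc⟩ := x
    cases sv
    · have hd : (2 * ∑ j, e j) + (∑ j, if s j then 1 else 0) + 0 = i := hc.1
      have hw : np + (2 * ∑ j, e j) + (∑ j, if s j then 1 else 0) + 0 = k := hc.2
      apply Subtype.ext
      have hnp : np = k - i := by omega
      subst hnp
      rfl
    · have hd : (2 * ∑ j, e j) + (∑ j, if s j then 1 else 0) + 3 = i := hc.1
      have hw : np + (2 * ∑ j, e j) + (∑ j, if s j then 1 else 0) + 2 = k := hc.2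
      apply Subtype.ext
      have hnp : np = k - i + 1 := by omega
      subst hnp
      rfl
  right_inv y := by
    rcases y with ⟨⟨e, s⟩, hp⟩ | ⟨⟨e, s⟩, hp⟩ <;> simp

private def equivSmall (hik : i ≤ k) (h3 : i < 3) : XT d i k ≃ PT d i where
  toFun x :=
    match x with
    | ⟨(_, e, s, false), hc⟩ => ⟨(e, s), by
        have h1 : (2 * ∑ j, e j) + (∑ j, if s j then 1 else 0) + 0 = i := hc.1
        show (2 * ∑ j, e j) + (∑ j, if s j then 1 else 0) = i
        omega⟩
    | ⟨(_, e, s, true), hc⟩ => False.elim (by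
        have h1 : (2 * ∑ j, e j) + (∑ j, if s j then 1 else 0) + 3 = i := hc.1
        omega)
  invFun y :=
    match y with
    | ⟨(e, s), hp⟩ => ⟨(k - i, e, s, false), by
        have hp' : (2 * ∑ j, e j) + (∑ j, if s j then 1 else 0) = i := hp
        refine ⟨?_, ?_⟩
        · show (2 * ∑ j, e j) + (∑ j, if s j then 1 else 0) + 0 = i
          omega
        · show (k - i) + (2 * ∑ j, e j) + (∑ j, if s j then 1 else 0) + 0 = k
          omega⟩
  left_inv x := by
    obtain ⟨⟨np, e, s, sv⟩, hc⟩ := x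
    cases sv
    · have hd : (2 * ∑ j, e j) + (∑ j, if s j then 1 else 0) + 0 = i := hc.1
      have hw : np + (2 * ∑ j, e j) + (∑ j, if s j then 1 else 0) + 0 = k := hc.2
      apply Subtype.ext
      have hnp : np = k - i := by omega
      subst hnp
      rfl
    · exact absurd hc.1 (by
        show ¬((2 * ∑ j, e j) + (∑ j, if s j then 1 else 0) + 3 = i)
        omega)
  right_inv y := by
    rcases y with ⟨⟨e, s⟩, hp⟩; simp; rfl

private def equivEdge (hik : i = k + 1) (h3 : 3 ≤ i) : XT d i k ≃ PT d (i - 3) where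
  toFun x :=
    match x with
    | ⟨(np, e, s, false), hc⟩ => False.elim (by
        have h1 : (2 * ∑ j, e j) + (∑ j, if s j then 1 else 0) + 0 = i := hc.1
        have h2 : np + (2 * ∑ j, e j) + (∑ j, if s j then 1 else 0) + 0 = k := hc.2
        omega)
    | ⟨(_, e, s, true), hc⟩ => ⟨(e, s), by
        have h1 : (2 * ∑ j, e j) + (∑ j, if s j then 1 else 0) + 3 = i := hc.1
        show (2 * ∑ j, e j) + (∑ j, if s j then 1 else 0) = i - 3
        omega⟩
  invFun y :=
    match y with
    | ⟨(e, s), hp⟩ => ⟨(0, e, s, true), by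
        have hp' : (2 * ∑ j, e j) + (∑ j, if s j then 1 else 0) = i - 3 := hp
        refine ⟨?_, ?_⟩
        · show (2 * ∑ j, e j) + (∑ j, if s j then 1 else 0) + 3 = i
          omega
        · show 0 + (2 * ∑ j, e j) + (∑ j, if s j then 1 else 0) + 2 = k
          omega⟩
  left_inv x := by
    obtain ⟨⟨np, e, s, sv⟩, hc⟩ := x
    cases sv
    · exact absurd hc.2 (by
        have h1 : (2 * ∑ j, e j) + (∑ j, if s j then 1 else 0) + 0 = i := hc.1
        show ¬(np + (2 * ∑ j, e j) + (∑ j, if s j then 1 else 0) + 0 = k)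
        omega)
    · have hd : (2 * ∑ j, e j) + (∑ j, if s j then 1 else 0) + 3 = i := hc.1
      have hw : np + (2 * ∑ j, e j) + (∑ j, if s j then 1 else 0) + 2 = k := hc.2
      apply Subtype.ext
      have hnp : np = 0 := by omega
      subst hnp
      rfl
  right_inv y := by
    rcases y with ⟨⟨e, s⟩, hp⟩; simp; rfl

private lemma isEmptyX (hcond : k + 1 < i ∨ (i = k + 1 ∧ i < 3)) : IsEmpty (XT d i k) := by
  constructor
  rintro ⟨⟨np, e, s, sv⟩, hc⟩
  cases sv
  · have hd : (2 * ∑ j, e j) + (∑ j, if s j then 1 else 0) + 0 = i := hc.1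
    have hw : np + (2 * ∑ j, e j) + (∑ j, if s j then 1 else 0) + 0 = k := hc.2
    omega
  · have hd : (2 * ∑ j, e j) + (∑ j, if s j then 1 else 0) + 3 = i := hc.1
    have hw : np + (2 * ∑ j, e j) + (∑ j, if s j then 1 else 0) + 2 = k := hc.2
    omega

end Equivs

/-- Betti numbers of configuration spaces of the closed nonorientable surface `N_h`
(Proposition `closed nonorientable`), formalized as the dimension of the degree-`i`,
weight-`k` piece of `ℚ[p, ũ_1,…,ũ_{h−1}] ⊗ Λ[ṽ, u_1,…,u_{h−1}]`, where `p` has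
(degree, weight) `(0,1)`, `u_j` has `(1,1)`, `ũ_j` has `(2,2)` and `ṽ` has `(3,2)`.
A basis is given by tuples `(n_p, e, s, sv)` of the exponent of `p`, the exponents of
the `ũ_j`, the set of `u_j` occurring, and whether `ṽ` occurs.  The dimension equals
`binom(h+i−2,h−2) + binom(h+i−5,h−2)` for `i ≤ k`, `binom(h+i−5,h−2)` for `i = k+1`,
and `0` otherwise, with the convention `binom(−1,−1) = 1`. -/
theorem betti_closed_nonorientable (h i k : ℕ) (hh : 1 ≤ h) :
    (Nat.card {x : ℕ × (Fin (h - 1) → ℕ) × (Fin (h - 1) → Bool) × Bool //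
        (2 * ∑ j, x.2.1 j) + (∑ j, if x.2.2.1 j then 1 else 0)
            + (if x.2.2.2 then 3 else 0) = i ∧
        x.1 + (2 * ∑ j, x.2.1 j) + (∑ j, if x.2.2.1 j then 1 else 0)
            + (if x.2.2.2 then 2 else 0) = k} : ℤ)
      = if i ≤ k then
          ibinom ((h : ℤ) + i - 2) ((h : ℤ) - 2) + ibinom ((h : ℤ) + i - 5) ((h : ℤ) - 2)
        else if i = k + 1 then
          ibinom ((h : ℤ) + i - 5) ((h : ℤ) - 2)
        else 0 := by
  have hcast : ∀ m : ℕ, 3 ≤ m →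
      ibinom ((h : ℤ) + m - 5) ((h : ℤ) - 2) = ((h - 1 + (m - 3) - 1).choose (m - 3) : ℤ) := by
    intro m hm
    have := ibinom_eq h (m - 3) hh
    have hcc : (h : ℤ) + ((m - 3 : ℕ) : ℤ) - 2 = (h : ℤ) + m - 5 := by omega
    rwa [hcc] at this
  by_cases hik : i ≤ k
  · rw [if_pos hik]
    by_cases h3 : 3 ≤ i
    · rw [Nat.card_congr (equivBig hik h3), Nat.card_sum, cardPT, cardPT,
        ibinom_eq h i hh, hcast i h3]
      push_cast
      ring
    · rw [Nat.card_congr (equivSmall hik (by omega)), cardPT, ibinom_eq h i hh,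
        ibinom_small h i (by omega)]
      push_cast
      ring
  · rw [if_neg hik]
    by_cases heq : i = k + 1
    · rw [if_pos heq]
      by_cases h3 : 3 ≤ i
      · rw [Nat.card_congr (equivEdge heq h3), cardPT, hcast i h3]
      · have := isEmptyX (d := h - 1) (Or.inr ⟨heq, by omega⟩)
        rw [Nat.card_of_isEmpty, ibinom_small h i (by omega)]
        norm_num
    · rw [if_neg heq]
      have := isEmptyX (d := h - 1) (i := i) (k := k) (Or.inl (by omega))
      rw [Nat.card_of_isEmpty]
      norm_num
end

section
/- The dimension of the degree-i, weight-k graded piece of the free graded-commutative algebra on generators p (degree 0, weight 1), ũ_j (degree 2, weight 2) for 1 ≤ j ≤ h+n−2, and exterior generators u_j (degree 1, weight 1) for 1 ≤ j ≤ h+n−1, equals binom(h+n+i−3, h+n−3) + binom(h+n+i−4, h+n−3) when i ≤ k, and 0 when i > k. -/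
theorem natCard_sum_eq_choose (ι : Type*) [Fintype ι] (j : ℕ) :
    Nat.card {b : ι → ℕ // ∑ x, b x = j} = (Fintype.card ι + j - 1).choose j := by
  classical
  rw [Nat.card_congr (Sym.equivNatSumOfFintype ι j).symm, Nat.card_eq_fintype_card,
    Sym.card_sym_eq_choose]

instance (ι : Type*) [Fintype ι] (j : ℕ) : Finite {b : ι → ℕ // ∑ x, b x = j} := by
  classical exact .of_equiv _ (Sym.equivNatSumOfFintype ι j)

instance (ι : Type*) [Fintype ι] (j : ℤ) : Finite {b : ι → ℕ // (∑ x, b x : ℤ) = j} :=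
  .of_injective (β := {b : ι → ℕ // ∑ x, b x = j.toNat})
    (fun b => ⟨b.1, by have := b.2; rw [← Nat.cast_sum] at this; omega⟩)
    fun _ _ h => Subtype.ext (Subtype.mk.inj h)

theorem ibinom_natCast_s15 (a b : ℕ) : ibinom a b = a.choose b := by
  rw [ibinom, if_neg (by omega)]
  split_ifs with h
  · simp
  · rw [Nat.choose_eq_zero_of_lt (by omega), Nat.cast_zero]

-- The convention `ibinom (-1) (-1) = 1` is what makes this hold for `m = 0`.
theorem natCard_fin_sum_eq_ibinom (m : ℕ) (j : ℤ) :
    (Nat.card {b : Fin m → ℕ // (∑ x, b x : ℤ) = j} : ℤ) = ibinom (m + j - 1) (m - 1) := by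
  rcases j with j | j
  · simp_rw [Int.ofNat_eq_natCast, ← Nat.cast_sum, Nat.cast_inj]
    rw [natCard_sum_eq_choose, Fintype.card_fin]
    rcases m with _ | m
    · rcases j with _ | j <;> simp [ibinom]
    · rw [show ((m + 1 : ℕ) : ℤ) + j - 1 = (m + j : ℕ) by push_cast; ring,
        show ((m + 1 : ℕ) : ℤ) - 1 = m by push_cast; ring, ibinom_natCast_s15,
        Nat.add_right_comm, Nat.add_sub_cancel, Nat.choose_symm_add]
  · have : IsEmpty {b : Fin m → ℕ // (∑ x, b x : ℤ) = .negSucc j} := by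
      refine ⟨fun ⟨b, hb⟩ => ?_⟩
      have : (0 : ℤ) ≤ ∑ x, (b x : ℤ) := by positivity
      omega
    rw [Nat.card_of_isEmpty, ibinom, if_neg (by omega), if_neg (by omega), Nat.cast_zero]

def Equiv.piNatBoolEquivPiNat (ι : Type*) : (ι → ℕ) × (ι → Bool) ≃ (ι → ℕ) :=
  (Equiv.arrowProdEquivProdArrow ι _ _).symm.trans
    (Equiv.piCongrRight fun _ => (Equiv.prodComm ℕ Bool).trans Equiv.boolProdNatEquivNat)

theorem Equiv.sum_piNatBoolEquivPiNat {ι : Type*} [Fintype ι] (a : ι → ℕ) (s : ι → Bool) :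
    ∑ j, Equiv.piNatBoolEquivPiNat ι (a, s) j = 2 * ∑ j, a j + ∑ j, if s j then 1 else 0 := by
  simp [Equiv.piNatBoolEquivPiNat, Nat.bit_val, Bool.toNat, Bool.cond_eq_ite,
    Finset.sum_add_distrib, Finset.mul_sum]

def degreeEquiv (m : ℕ) : (Fin m → ℕ) × (Fin (m + 1) → Bool) ≃ Bool × (Fin m → ℕ) where
  toFun y := (y.2 0, Equiv.piNatBoolEquivPiNat _ (y.1, Fin.tail y.2))
  invFun z := ((Equiv.piNatBoolEquivPiNat _).symm z.2).map id (Fin.cons z.1)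
  left_inv y := by simp
  right_inv z := by simp

theorem degreeEquiv_degree (m : ℕ) (y : (Fin m → ℕ) × (Fin (m + 1) → Bool)) :
    (if (degreeEquiv m y).1 then 1 else 0) + ∑ j, (degreeEquiv m y).2 j
      = 2 * ∑ j, y.1 j + ∑ j, if y.2 j then 1 else 0 := by
  simp only [degreeEquiv, Equiv.coe_fn_mk, Equiv.sum_piNatBoolEquivPiNat, Fin.tail,
    Fin.sum_univ_succ (f := fun j => if y.2 j then 1 else 0)]
  exact add_left_comm _ _ _

theorem natCard_bool_prod_sum_eq (m i : ℕ) :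
    (Nat.card {z : Bool × (Fin m → ℕ) // (if z.1 then 1 else 0) + ∑ j, z.2 j = i} : ℤ)
      = ibinom (m + i - 1) (m - 1) + ibinom (m + i - 2) (m - 1) := by
  let split : {z : Bool × (Fin m → ℕ) // (if z.1 then 1 else 0) + ∑ j, z.2 j = i} ≃
      {b : Fin m → ℕ // (∑ j, b j : ℤ) = i} ⊕ {b : Fin m → ℕ // (∑ j, b j : ℤ) = i - 1} :=
    ((Equiv.boolProdEquivSum _).subtypeEquiv
      (q := Sum.elim (fun b => (∑ j, b j : ℤ) = i) (fun b => (∑ j, b j : ℤ) = i - 1))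
      (by rintro ⟨_ | _, b⟩ <;>
        simp only [Equiv.boolProdEquivSum_apply, Sum.elim_inl, Sum.elim_inr, Bool.false_eq_true,
          ↓reduceIte, zero_add] <;> rw [← Nat.cast_sum] <;> omega)).trans Equiv.subtypeSum
  rw [Nat.card_congr split, Nat.card_sum, Nat.cast_add, natCard_fin_sum_eq_ibinom,
    natCard_fin_sum_eq_ibinom]
  congr 2; ring

theorem natCard_degree_eq (m i : ℕ) :
    (Nat.card {y : (Fin m → ℕ) × (Fin (m + 1) → Bool) //
        2 * ∑ j, y.1 j + ∑ j, (if y.2 j then 1 else 0) = i} : ℤ)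
      = ibinom (m + i - 1) (m - 1) + ibinom (m + i - 2) (m - 1) := by
  rw [← natCard_bool_prod_sum_eq]
  exact congrArg _ (Nat.card_congr ((degreeEquiv m).subtypeEquiv fun y => by
    rw [degreeEquiv_degree]))

theorem natCard_prod_fiber {Y : Type*} (D : Y → ℕ) (i k : ℕ) :
    Nat.card {x : ℕ × Y // D x.2 = i ∧ x.1 + D x.2 = k}
      = if i ≤ k then Nat.card {y // D y = i} else 0 := by
  split_ifs with hik
  · refine Nat.card_congr
      { toFun x := ⟨x.1.2, x.2.1⟩
        invFun y := ⟨(k - i, y.1), y.2, show k - i + D y.1 = k by omega⟩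
        left_inv := ?_
        right_inv _ := rfl }
    rintro ⟨⟨p, y⟩, hy, hp⟩
    ext
    · show k - i = p; omega
    · rfl
  · have : IsEmpty {x : ℕ × Y // D x.2 = i ∧ x.1 + D x.2 = k} := ⟨fun ⟨x, hi, hk⟩ => by omega⟩
    exact Nat.card_of_isEmpty

/-- A basis of the algebra is given by the exponent of `p`, the exponents of the `ũ_j`, and the
set of `u_j` occurring. -/
theorem betti_open_nonorientable (h n i k : ℕ) (hh : 1 ≤ h) (hn : 1 ≤ n) :
    (Nat.card {x : ℕ × (Fin (h + n - 2) → ℕ) × (Fin (h + n - 1) → Bool) //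
        (2 * ∑ j, x.2.1 j) + (∑ j, if x.2.2 j then 1 else 0) = i ∧
        x.1 + (2 * ∑ j, x.2.1 j) + (∑ j, if x.2.2 j then 1 else 0) = k} : ℤ)
      = if i ≤ k then
          ibinom ((h : ℤ) + n + i - 3) ((h : ℤ) + n - 3)
            + ibinom ((h : ℤ) + n + i - 4) ((h : ℤ) + n - 3)
        else 0 := by
  obtain ⟨m, hm⟩ : ∃ m, h + n - 2 = m := ⟨_, rfl⟩
  rw [hm, show h + n - 1 = m + 1 by omega]
  have hfiber := natCard_prod_fiber
    (fun y : (Fin m → ℕ) × (Fin (m + 1) → Bool) => 2 * ∑ j, y.1 j + ∑ j, if y.2 j then 1 else 0) i k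
  simp only [← add_assoc] at hfiber
  rw [hfiber]
  split_ifs
  · rw [natCard_degree_eq]
    congr 2 <;> omega
  · rfl
end
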